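/- Let F be an algebraically closed field, n > 1 an integer, and γ₁ ≠ γ₂ in F. For x in the split octonion algebra O over F, the equation x^n = γ₁·e₁ + γ₂·e₂ holds if and only if there exist ξ₁, ξ₂ ∈ F with ξ₁^n = γ₁, ξ₂^n = γ₂, and x = ξ₁·e₁ + ξ₂·e₂. -/

import Mathlib

noncomputable section

/-- The split octonion algebra over `F`, given by Zorn vector matrices
`(x1, u; v, x2)` with `x1, x2 ∈ F` and `u, v ∈ F³`. -/
@[ext]
structure SplitOctonion (F : Type*) where
  x1 : F
  u : Fin 3 → F
  v : Fin 3 → F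
  x2 : F

namespace SplitOctonion

variable {F : Type*} [Field F]

/-- Dot product on `F³`. -/
def dot (x y : Fin 3 → F) : F := x 0 * y 0 + x 1 * y 1 + x 2 * y 2

/-- Cross product on `F³`. -/
def cross (x y : Fin 3 → F) : Fin 3 → F :=
  ![x 1 * y 2 - x 2 * y 1, x 2 * y 0 - x 0 * y 2, x 0 * y 1 - x 1 * y 0]

instance : Zero (SplitOctonion F) := ⟨⟨0, 0, 0, 0⟩⟩
instance : One (SplitOctonion F) := ⟨⟨1, 0, 0, 1⟩⟩
instance : Add (SplitOctonion F) :=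
  ⟨fun x y => ⟨x.x1 + y.x1, x.u + y.u, x.v + y.v, x.x2 + y.x2⟩⟩
instance : Neg (SplitOctonion F) := ⟨fun x => ⟨-x.x1, -x.u, -x.v, -x.x2⟩⟩
instance : SMul F (SplitOctonion F) :=
  ⟨fun c x => ⟨c * x.x1, c • x.u, c • x.v, c * x.x2⟩⟩

/-- Zorn vector matrix multiplication. -/
instance : Mul (SplitOctonion F) :=
  ⟨fun x y => ⟨x.x1 * y.x1 + dot x.u y.v,
    x.x1 • y.u + y.x2 • x.u - cross x.v y.v,
    y.x1 • x.v + x.x2 • y.v + cross x.u y.u,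
    x.x2 * y.x2 + dot x.v y.u⟩⟩

@[simp] lemma zero_x1 : (0 : SplitOctonion F).x1 = 0 := rfl
@[simp] lemma zero_u : (0 : SplitOctonion F).u = 0 := rfl
@[simp] lemma zero_v : (0 : SplitOctonion F).v = 0 := rfl
@[simp] lemma zero_x2 : (0 : SplitOctonion F).x2 = 0 := rfl
@[simp] lemma add_x1 (x y : SplitOctonion F) : (x + y).x1 = x.x1 + y.x1 := rfl
@[simp] lemma add_u (x y : SplitOctonion F) : (x + y).u = x.u + y.u := rfl
@[simp] lemma add_v (x y : SplitOctonion F) : (x + y).v = x.v + y.v := rfl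
@[simp] lemma add_x2 (x y : SplitOctonion F) : (x + y).x2 = x.x2 + y.x2 := rfl
@[simp] lemma neg_x1 (x : SplitOctonion F) : (-x).x1 = -x.x1 := rfl
@[simp] lemma neg_u (x : SplitOctonion F) : (-x).u = -x.u := rfl
@[simp] lemma neg_v (x : SplitOctonion F) : (-x).v = -x.v := rfl
@[simp] lemma neg_x2 (x : SplitOctonion F) : (-x).x2 = -x.x2 := rfl
@[simp] lemma smul_x1 (c : F) (x : SplitOctonion F) : (c • x).x1 = c * x.x1 := rfl
@[simp] lemma smul_u (c : F) (x : SplitOctonion F) : (c • x).u = c • x.u := rfl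
@[simp] lemma smul_v (c : F) (x : SplitOctonion F) : (c • x).v = c • x.v := rfl
@[simp] lemma smul_x2 (c : F) (x : SplitOctonion F) : (c • x).x2 = c * x.x2 := rfl

instance : AddCommGroup (SplitOctonion F) where
  add_assoc x y z := by ext <;> simp [add_assoc]
  zero_add x := by ext <;> simp
  add_zero x := by ext <;> simp
  add_comm x y := by ext <;> simp [add_comm]
  neg_add_cancel x := by ext <;> simp
  nsmul := nsmulRec
  zsmul := zsmulRec

instance : Module F (SplitOctonion F) where
  one_smul x := by ext <;> simp
  mul_smul c d x := by ext <;> simp [mul_assoc, mul_smul]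
  smul_zero c := by ext <;> simp
  smul_add c x y := by ext <;> simp [mul_add, smul_add]
  add_smul c d x := by ext <;> simp [add_mul, add_smul]
  zero_smul x := by ext <;> simp

/-- Powers of a single octonion (well defined by power-associativity). -/
def npow (x : SplitOctonion F) : ℕ → SplitOctonion F
  | 0 => 1
  | n + 1 => npow x n * x

instance : Pow (SplitOctonion F) ℕ := ⟨npow⟩

/-- Substitution of an octonion into a polynomial over `F`:
`f(x) = αₙ xⁿ + ⋯ + α₁ x + α₀ • 1`. -/
def peval (f : Polynomial F) (x : SplitOctonion F) : SplitOctonion F :=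
  f.sum fun i c => c • x ^ i

/-- The octonion `e₁`. -/
def e1 : SplitOctonion F := ⟨1, 0, 0, 0⟩
/-- The octonion `e₂`. -/
def e2 : SplitOctonion F := ⟨0, 0, 0, 1⟩
/-- The octonion `u₁`. -/
def u1 : SplitOctonion F := ⟨0, ![1, 0, 0], 0, 0⟩

/-- Conjugation on `O`. -/
def conj (x : SplitOctonion F) : SplitOctonion F := ⟨x.x2, -x.u, -x.v, x.x1⟩

/-- The norm of an octonion. -/
def normO (x : SplitOctonion F) : F := x.x1 * x.x2 - dot x.u x.v

/-- The trace of an octonion. -/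
def trO (x : SplitOctonion F) : F := x.x1 + x.x2

/-- `g` is an `F`-algebra automorphism of `O`: a linear bijection preserving
multiplication (and the unit). -/
def IsAlgAut (g : SplitOctonion F ≃ₗ[F] SplitOctonion F) : Prop :=
  g 1 = 1 ∧ ∀ x y, g (x * y) = g x * g y

end SplitOctonion

/-! Every power of `x` lies in the span of `1` and `x`, because `x` satisfies the quadratic
equation `x² = tr(x) x - N(x) 1`. If `xⁿ = p 1 + q x` is diagonal with distinct diagonal entries
`γ₁ ≠ γ₂`, then `q (x₁ - x₂) = γ₁ - γ₂` forces `q ≠ 0`, so the off-diagonal vectors `u, v` of `x`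
vanish. Diagonal octonions multiply entrywise, so then `x = ξ₁ e₁ + ξ₂ e₂` with `ξᵢⁿ = γᵢ`. -/

namespace SplitOctonion

variable {F : Type*} [Field F]

@[simp] lemma one_x1 : (1 : SplitOctonion F).x1 = 1 := rfl
@[simp] lemma one_u : (1 : SplitOctonion F).u = 0 := rfl
@[simp] lemma one_v : (1 : SplitOctonion F).v = 0 := rfl
@[simp] lemma one_x2 : (1 : SplitOctonion F).x2 = 1 := rfl

@[simp] lemma mul_x1 (x y : SplitOctonion F) : (x * y).x1 = x.x1 * y.x1 + dot x.u y.v := rfl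
@[simp] lemma mul_u (x y : SplitOctonion F) :
    (x * y).u = x.x1 • y.u + y.x2 • x.u - cross x.v y.v := rfl
@[simp] lemma mul_v (x y : SplitOctonion F) :
    (x * y).v = y.x1 • x.v + x.x2 • y.v + cross x.u y.u := rfl
@[simp] lemma mul_x2 (x y : SplitOctonion F) : (x * y).x2 = x.x2 * y.x2 + dot x.v y.u := rfl

protected lemma pow_zero (x : SplitOctonion F) : x ^ 0 = 1 := rfl
protected lemma pow_succ (x : SplitOctonion F) (n : ℕ) : x ^ (n + 1) = x ^ n * x := rfl

protected lemma one_mul (x : SplitOctonion F) : 1 * x = x := by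
  ext : 1 <;> try (funext i; fin_cases i)
  all_goals simp [dot, cross]

protected lemma add_mul (x y z : SplitOctonion F) : (x + y) * z = x * z + y * z := by
  ext : 1 <;> try (funext i; fin_cases i)
  all_goals (simp [dot, cross, Matrix.vecHead, Matrix.vecTail]; ring)

protected lemma smul_mul (c : F) (x y : SplitOctonion F) : (c • x) * y = c • (x * y) := by
  ext : 1 <;> try (funext i; fin_cases i)
  all_goals (simp [dot, cross, Matrix.vecHead, Matrix.vecTail]; ring)

lemma mul_self_eq_trO_smul_sub_normO_smul (x : SplitOctonion F) :
    x * x = trO x • x - normO x • 1 := by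
  ext : 1 <;> try (funext i; fin_cases i)
  all_goals (simp [trO, normO, dot, cross, sub_eq_add_neg]; ring)

lemma exists_pow_eq_smul_one_add_smul (x : SplitOctonion F) (n : ℕ) :
    ∃ p q : F, x ^ n = p • 1 + q • x := by
  induction n with
  | zero => exact ⟨1, 0, by simp [SplitOctonion.pow_zero]⟩
  | succ n ih =>
    obtain ⟨p, q, hpq⟩ := ih
    refine ⟨-(q * normO x), p + q * trO x, ?_⟩
    rw [SplitOctonion.pow_succ, hpq, SplitOctonion.add_mul, SplitOctonion.smul_mul,
      SplitOctonion.smul_mul, SplitOctonion.one_mul, mul_self_eq_trO_smul_sub_normO_smul]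
    module

lemma smul_e1_add_smul_e2 (a b : F) : a • (e1 : SplitOctonion F) + b • e2 = ⟨a, 0, 0, b⟩ := by
  ext <;> simp [e1, e2]

lemma diag_pow (a b : F) (n : ℕ) :
    (⟨a, 0, 0, b⟩ : SplitOctonion F) ^ n = ⟨a ^ n, 0, 0, b ^ n⟩ := by
  induction n with
  | zero => ext <;> simp [SplitOctonion.pow_zero]
  | succ n ih =>
    rw [SplitOctonion.pow_succ, ih]
    ext : 1 <;> try (funext i; fin_cases i)
    all_goals simp [dot, cross, pow_succ]

lemma eq_diag_of_smul_one_add_smul_eq {p q a b : F} {x : SplitOctonion F} (hab : a ≠ b)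
    (h : p • 1 + q • x = ⟨a, 0, 0, b⟩) : x = ⟨x.x1, 0, 0, x.x2⟩ := by
  have hq : q ≠ 0 := by
    rintro rfl
    have h₁ := congrArg x1 h
    have h₂ := congrArg x2 h
    simp only [add_x1, add_x2, smul_x1, smul_x2, one_x1, one_x2, zero_mul, add_zero] at h₁ h₂
    exact hab (h₁.symm.trans h₂)
  have hu : q • x.u = 0 := by simpa using congrArg u h
  have hv : q • x.v = 0 := by simpa using congrArg v h
  exact SplitOctonion.ext rfl ((smul_eq_zero.mp hu).resolve_left hq)
    ((smul_eq_zero.mp hv).resolve_left hq) rfl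

end SplitOctonion

open SplitOctonion in
theorem pow_eq_diag_iff_general {F : Type*} [Field F]
    (n : ℕ) (γ₁ γ₂ : F) (hγ : γ₁ ≠ γ₂) (x : SplitOctonion F) :
    x ^ n = γ₁ • (e1 : SplitOctonion F) + γ₂ • e2 ↔
      ∃ ξ₁ ξ₂ : F, ξ₁ ^ n = γ₁ ∧ ξ₂ ^ n = γ₂ ∧
        x = ξ₁ • (e1 : SplitOctonion F) + ξ₂ • e2 := by
  rw [smul_e1_add_smul_e2]
  constructor
  · intro h
    obtain ⟨p, q, hpq⟩ := exists_pow_eq_smul_one_add_smul x n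
    have hx := eq_diag_of_smul_one_add_smul_eq hγ (hpq ▸ h)
    rw [hx, diag_pow] at h
    exact ⟨x.x1, x.x2, congrArg x1 h, congrArg x2 h, by rwa [smul_e1_add_smul_e2]⟩
  · rintro ⟨ξ₁, ξ₂, rfl, rfl, rfl⟩
    rw [smul_e1_add_smul_e2, diag_pow]

open SplitOctonion in
/-- the `n`-th roots of `γ₁·e₁ + γ₂·e₂` with `γ₁ ≠ γ₂`. -/
theorem pow_eq_diag_iff {F : Type*} [Field F] [IsAlgClosed F]
    (n : ℕ) (hn : 1 < n) (γ₁ γ₂ : F) (hγ : γ₁ ≠ γ₂) (x : SplitOctonion F) :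
    x ^ n = γ₁ • (e1 : SplitOctonion F) + γ₂ • e2 ↔
      ∃ ξ₁ ξ₂ : F, ξ₁ ^ n = γ₁ ∧ ξ₂ ^ n = γ₂ ∧
        x = ξ₁ • (e1 : SplitOctonion F) + ξ₂ • e2 :=
  pow_eq_diag_iff_general n γ₁ γ₂ hγ x
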